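/- The HP theory is a similarity-based causal theory: for every causal model M and basic formula φ, ButFor(M,φ) ⊆ HP(M,φ), and every V ∈ HP(M,φ) is a putative cause of φ in M with respect to HP. -/

import Mathlib

namespace HPFramework

open Classical

/-- A causal model in the Halpern–Pearl framework, over exogenous variables `U`,
endogenous variables `V` and value domain `D`.  It packages the causal structure
(the finite ranges of the variables), the DAG (the well-founded `parent` relation),
the structural equations `F` (each depending only on the exogenous variables and the
parents, and taking values in the range), and the context `ctx`. -/
structure CausalModel (U V D : Type) [Fintype U] [Fintype V] where
  rangeU : U → Finset D
  range : V → Finset D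
  rangeU_nonempty : ∀ W, (rangeU W).Nonempty
  range_nonempty : ∀ X, (range X).Nonempty
  parent : V → V → Prop
  acyclic : WellFounded parent
  F : V → (U → D) → (V → D) → D
  F_parents : ∀ X u (a b : V → D), (∀ Y, parent Y X → a Y = b Y) → F X u a = F X u b
  F_range : ∀ X u v, (∀ W, u W ∈ rangeU W) → (∀ Y, v Y ∈ range Y) → F X u v ∈ range X
  ctx : U → D
  ctx_range : ∀ W, ctx W ∈ rangeU W

variable {U V D : Type} [Fintype U] [Fintype V]

/-- The unique solution `S_M` of the system of structural equations of `M`. -/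
noncomputable def sol (M : CausalModel U V D) : V → D :=
  WellFounded.fix M.acyclic fun X ih =>
    M.F X M.ctx fun Y => if h : M.parent Y X then ih Y h else (M.range_nonempty Y).choose

/-- A partial, range-permitted assignment of values to the endogenous variables of `M`. -/
def PAssign (M : CausalModel U V D) : Type :=
  {g : V → Option D // ∀ X d, g X = some d → d ∈ M.range X}

/-- The intervened model `M_[X⃗ ← x⃗]`: the equation of each variable assigned a value
by `g` is replaced by the corresponding constant; other equations are unchanged. -/
noncomputable def intervene (M : CausalModel U V D) (g : PAssign M) : CausalModel U V D where
  rangeU := M.rangeU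
  range := M.range
  rangeU_nonempty := M.rangeU_nonempty
  range_nonempty := M.range_nonempty
  parent := M.parent
  acyclic := M.acyclic
  F := fun X u v => (g.1 X).getD (M.F X u v)
  F_parents := by
    intro X u a b hab
    cases h : g.1 X with
    | none => simp only [h, Option.getD_none]; exact M.F_parents X u a b hab
    | some d => simp [h]
  F_range := by
    intro X u v hu hv
    cases h : g.1 X with
    | none => simpa [h] using M.F_range X u v hu hv
    | some d => simpa [h] using g.2 X d h
  ctx := M.ctx
  ctx_range := M.ctx_range

/-- Basic formulas: Boolean combinations of atoms `(X = x)` with `X` endogenous. -/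
inductive BForm (V D : Type) : Type where
  | atom : V → D → BForm V D
  | not : BForm V D → BForm V D
  | and : BForm V D → BForm V D → BForm V D

/-- Evaluation of a basic formula at an assignment of values to the endogenous variables. -/
def BForm.eval (s : V → D) : BForm V D → Prop
  | .atom X x => s X = x
  | .not φ => ¬ φ.eval s
  | .and φ ψ => φ.eval s ∧ ψ.eval s

/-- `M ⊨ φ` for a basic formula `φ`, evaluated via the solution `S_M`. -/
def Sat (M : CausalModel U V D) (φ : BForm V D) : Prop := (BForm.eval (sol M)) φ

variable [DecidableEq V]

/-- The single intervention `[X ← x]` (with `x` in the range of `X`). -/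
noncomputable def single (M : CausalModel U V D) (X : V) (x : D)
    (hx : x ∈ M.range X) : PAssign M :=
  ⟨fun Y => if Y = X then some x else none, by
    intro Y d h
    simp only at h
    split at h
    next heq => cases h; exact heq ▸ hx
    next => cases h⟩

/-- The but-for theory: `X ∈ ButFor(M,φ)` iff `M ⊨ φ` and there is `x ∈ R(X)` with
`M ⊨ [X ← x] ¬φ`. -/
noncomputable def ButFor (M : CausalModel U V D) (φ : BForm V D) : Set V :=
  {X | Sat M φ ∧ ∃ x, ∃ hx : x ∈ M.range X, ¬ Sat (intervene M (single M X x hx)) φ}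

/-- `ℳ(A)` (relative to `M`): all models obtained from `M` by a (possibly partial)
range-permitted assignment to the variables in `A`, while any assigned variable outside
`A` is held fixed at its actual value in `M`. -/
def MSet (M : CausalModel U V D) (A : Set V) : Set (CausalModel U V D) :=
  {M' | ∃ g : PAssign M,
    (∀ X, X ∉ A → ∀ d, g.1 X = some d → d = sol M X) ∧ M' = intervene M g}

/-- A causal theory: a map assigning to every model and basic formula a set of
endogenous variables (the causes). -/
def CausalTheory (U V D : Type) [Fintype U] [Fintype V] : Type _ :=
  CausalModel U V D → BForm V D → Set V

/-- `X` is a putative cause of `φ` in `M` (w.r.t. the theory `C`). -/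
noncomputable def Putative (C : CausalTheory U V D) (M : CausalModel U V D)
    (φ : BForm V D) (X : V) : Prop :=
  ∃ M' ∈ MSet M (C M φ), sol M X = sol M' X ∧ X ∈ ButFor M' φ

/-- `X` is a preempted cause of `φ` in `M` (w.r.t. `C`): putative but not a cause. -/
noncomputable def Preempted (C : CausalTheory U V D) (M : CausalModel U V D)
    (φ : BForm V D) (X : V) : Prop :=
  Putative C M φ X ∧ X ∉ C M φ

/-- A theory is similarity-based if it recognises at least all but-for causes and at
most all putative causes. -/
noncomputable def SimilarityBased (C : CausalTheory U V D) : Prop :=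
  ∀ M φ, ButFor M φ ⊆ C M φ ∧ ∀ X ∈ C M φ, Putative C M φ X

/-- The principle of presumption. -/
noncomputable def Presumption (C : CausalTheory U V D) : Prop :=
  ∀ M φ X, Preempted C M φ X →
    ∀ M' ∈ MSet M (C M φ), sol M' X = sol M X → X ∈ ButFor M' φ →
      ∃ W, W ∉ C M φ ∧ sol M W ≠ sol M' W

/-- Empirical causal theories (fixed-point characterisation). -/
noncomputable def Empirical (C : CausalTheory U V D) : Prop :=
  ∀ M φ X, X ∈ C M φ ↔
    ∃ M' ∈ MSet M (C M φ), sol M X = sol M' X ∧ X ∈ ButFor M' φ ∧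
      ∀ W, W ∉ C M φ → sol M W = sol M' W

/-- The relation `M₁ ⊑_{C,φ} M₂`. -/
noncomputable def CRel (C : CausalTheory U V D) (φ : BForm V D)
    (M₁ M₂ : CausalModel U V D) : Prop :=
  M₂ ∈ MSet M₁ (C M₁ φ) ∧ Sat M₂ φ ∧ ∀ X, X ∉ C M₁ φ → sol M₁ X = sol M₂ X

/-- The closure property. -/
noncomputable def Closure (C : CausalTheory U V D) : Prop :=
  ∀ (M : CausalModel U V D) (φ : BForm V D) M', CRel C φ M M' → C M' φ ⊆ C M φ

/-- AC1 and AC2 of Halpern's (2015) definition, for the set `Xs`: `M ⊨ φ` and there is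
an intervention assigning (range-permitted) values to all of `Xs` and holding any other
assigned variable fixed at its actual value, after which `¬φ` holds. -/
noncomputable def AC12 (M : CausalModel U V D) (φ : BForm V D) (Xs : Set V) : Prop :=
  Sat M φ ∧ ∃ g : PAssign M,
    (∀ X ∈ Xs, (g.1 X).isSome) ∧
    (∀ X, X ∉ Xs → ∀ d, g.1 X = some d → d = sol M X) ∧
    ¬ Sat (intervene M g) φ

/-- `Xs` is a complex cause of `φ` in `M`: AC1, AC2 and the minimality condition AC3. -/
noncomputable def ComplexCause (M : CausalModel U V D) (φ : BForm V D) (Xs : Set V) : Prop :=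
  AC12 M φ Xs ∧ ∀ Ys : Set V, Ys ⊂ Xs → ¬ AC12 M φ Ys

/-- The HP theory: `X ∈ HP(M,φ)` iff `X` belongs to some complex cause of `φ` in `M`. -/
noncomputable def HP : CausalTheory U V D := fun M φ =>
  {X | ∃ Xs : Set V, X ∈ Xs ∧ ComplexCause M φ Xs}

/-- Helper: a relation admitting a strictly monotone rank function is well-founded. -/
theorem wf_of_rank {α : Type} (r : α → α → Prop) (rk : α → ℕ)
    (h : ∀ a b, r a b → rk a < rk b) : WellFounded r :=
  Subrelation.wf (fun {a b} hr => h a b hr) (InvImage.wf rk Nat.lt_wfRel.wf)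



end HPFramework

/-!
A but-for cause `X` is a complex cause on its own: `{X}` satisfies AC2 via the single
intervention, and its only proper subset `∅` does not, since an intervention that only sets
variables to their actual values leaves the solution unchanged.

Conversely, let `X` lie in a complex cause `Xs` with AC2 intervention `g`, which sets `X` to
some `x`. Let `M'` be `M` intervened with `g`, except that `X` is pinned to its actual value.
Then `M'` lies in `ℳ(HP(M,φ))`, agrees with `M` at `X`, and satisfies `φ`, for otherwise
`Xs \ {X}` would already satisfy AC2, contradicting AC3. Setting `X ← x` in `M'` gives back
`M` intervened with `g`, where `¬φ` holds, so `X` is a but-for cause of `φ` in `M'`.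
-/

namespace HPFramework

variable {U V D : Type} [Fintype U] [Fintype V]

theorem sol_eq_F (M : CausalModel U V D) (X : V) : sol M X = M.F X M.ctx (sol M) := by
  conv_lhs => rw [sol, WellFounded.fix_eq]
  exact M.F_parents X M.ctx _ (sol M) fun Y hY => by rw [dif_pos hY]; rfl

theorem eq_sol_of_forall_eq_F (M : CausalModel U V D) (s : V → D)
    (h : ∀ X, s X = M.F X M.ctx s) : s = sol M := by
  funext X
  induction X using M.acyclic.induction with
  | _ X ih => rw [h X, M.F_parents X M.ctx s (sol M) ih, sol_eq_F]

theorem sol_mem_range (M : CausalModel U V D) (X : V) : sol M X ∈ M.range X := by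
  classical
  induction X using M.acyclic.induction with
  | _ X ih =>
    -- `F_range` needs an argument that is in range everywhere, not only at the parents.
    set s : V → D := fun Y => if M.parent Y X then sol M Y else (M.range_nonempty Y).choose
    have hs : ∀ Y, s Y ∈ M.range Y := fun Y => by
      by_cases hY : M.parent Y X
      · simpa only [s, if_pos hY] using ih Y hY
      · simpa only [s, if_neg hY] using (M.range_nonempty Y).choose_spec
    rw [sol_eq_F, M.F_parents X M.ctx (sol M) s fun Y hY => by simp only [s, if_pos hY]]
    exact M.F_range X M.ctx s M.ctx_range hs

theorem sat_congr {M₁ M₂ : CausalModel U V D} (h : sol M₁ = sol M₂) (φ : BForm V D) :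
    Sat M₁ φ ↔ Sat M₂ φ := by
  rw [Sat, Sat, h]

theorem sol_intervene_of_eq_some (M : CausalModel U V D) (g : PAssign M) {X : V} {d : D}
    (h : g.1 X = some d) : sol (intervene M g) X = d := by
  rw [sol_eq_F]
  simp only [intervene, h, Option.getD_some]

theorem sol_intervene_of_forall_eq_sol (M : CausalModel U V D) (g : PAssign M)
    (hg : ∀ X d, g.1 X = some d → d = sol M X) : sol (intervene M g) = sol M := by
  refine (eq_sol_of_forall_eq_F _ _ fun X => ?_).symm
  show sol M X = (g.1 X).getD (M.F X M.ctx (sol M))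
  cases h : g.1 X with
  | none => exact sol_eq_F M X
  | some d => exact (hg X d h).symm

def PAssign.orElse {M : CausalModel U V D} (h g : PAssign M) : PAssign M :=
  ⟨fun X => (h.1 X).or (g.1 X), fun X d hd => by
    cases hX : h.1 X with
    | none => simp only [hX, Option.none_or] at hd; exact g.2 X d hd
    | some e => simp only [hX, Option.some_or] at hd; exact Option.some_inj.1 hd ▸ h.2 X e hX⟩

theorem intervene_intervene (M : CausalModel U V D) (g : PAssign M)
    (h : PAssign (intervene M g)) :
    intervene (intervene M g) h = intervene M (PAssign.orElse (M := M) h g) := by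
  simp only [intervene, PAssign.orElse, CausalModel.mk.injEq, true_and, and_true]
  funext X u v
  cases h.1 X <;> rfl

theorem not_ac12_empty (M : CausalModel U V D) (φ : BForm V D) : ¬ AC12 M φ ∅ := by
  rintro ⟨hφ, g, -, hactual, hnot⟩
  have hsol := sol_intervene_of_forall_eq_sol M g fun X => hactual X (Set.notMem_empty X)
  exact hnot ((sat_congr hsol φ).2 hφ)

variable [DecidableEq V]

noncomputable def PAssign.pin {M : CausalModel U V D} (g : PAssign M) (X : V) : PAssign M :=
  ⟨Function.update g.1 X (some (sol M X)), fun Y d hd => by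
    rcases eq_or_ne Y X with rfl | hYX
    · rw [Function.update_self, Option.some_inj] at hd
      exact hd ▸ sol_mem_range M Y
    · rw [Function.update_of_ne hYX] at hd
      exact g.2 Y d hd⟩

theorem PAssign.pin_apply_self {M : CausalModel U V D} (g : PAssign M) (X : V) :
    (g.pin X).1 X = some (sol M X) :=
  Function.update_self _ _ _

theorem PAssign.pin_apply_of_ne {M : CausalModel U V D} (g : PAssign M) {X Y : V}
    (h : Y ≠ X) : (g.pin X).1 Y = g.1 Y :=
  Function.update_of_ne h _ _

theorem sol_intervene_pin_self (M : CausalModel U V D) (g : PAssign M) (X : V) :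
    sol (intervene M (g.pin X)) X = sol M X :=
  sol_intervene_of_eq_some M _ (g.pin_apply_self X)

theorem intervene_pin_single (M : CausalModel U V D) (g : PAssign M) {X : V} {x : D}
    (hgX : g.1 X = some x) (hx : x ∈ (intervene M (g.pin X)).range X) :
    intervene (intervene M (g.pin X)) (single _ X x hx) = intervene M g := by
  rw [intervene_intervene]
  congr 1
  refine Subtype.ext (funext fun Y => ?_)
  rcases eq_or_ne Y X with rfl | hYX
  · simp [PAssign.orElse, single, hgX]
  · simp [PAssign.orElse, single, g.pin_apply_of_ne hYX, hYX]

theorem complexCause_singleton_of_mem_butFor {M : CausalModel U V D} {φ : BForm V D} {X : V}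
    (hX : X ∈ ButFor M φ) : ComplexCause M φ {X} := by
  obtain ⟨hφ, x, hx, hnot⟩ := hX
  refine ⟨⟨hφ, single M X x hx, ?_, ?_, hnot⟩, fun Ys hYs => ?_⟩
  · rintro Y rfl
    simp [single]
  · intro Y hY d hd
    simp [single, Set.mem_singleton_iff.not.1 hY] at hd
  · rw [Set.eq_empty_of_ssubset_singleton hYs]
    exact not_ac12_empty M φ

theorem butFor_subset_hp (M : CausalModel U V D) (φ : BForm V D) : ButFor M φ ⊆ HP M φ :=
  fun X hX => ⟨{X}, rfl, complexCause_singleton_of_mem_butFor hX⟩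

theorem ac12_diff_singleton_of_not_sat_pin {M : CausalModel U V D} {φ : BForm V D}
    {Xs : Set V} {g : PAssign M} (hφ : Sat M φ) (hset : ∀ Y ∈ Xs, (g.1 Y).isSome)
    (hactual : ∀ Y, Y ∉ Xs → ∀ d, g.1 Y = some d → d = sol M Y) (X : V)
    (hpin : ¬ Sat (intervene M (g.pin X)) φ) : AC12 M φ (Xs \ {X}) := by
  refine ⟨hφ, g.pin X, fun Y ⟨hY, hYX⟩ => ?_, fun Y hY d hd => ?_, hpin⟩
  · rw [g.pin_apply_of_ne hYX]
    exact hset Y hY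
  · rcases eq_or_ne Y X with rfl | hYX
    · rw [g.pin_apply_self, Option.some_inj] at hd
      exact hd.symm
    · rw [g.pin_apply_of_ne hYX] at hd
      exact hactual Y (fun h => hY ⟨h, hYX⟩) d hd

theorem putative_of_mem_complexCause {C : CausalTheory U V D} {M : CausalModel U V D}
    {φ : BForm V D} {Xs : Set V} {X : V} (hXs : ComplexCause M φ Xs) (hX : X ∈ Xs)
    (hXsC : Xs ⊆ C M φ) : Putative C M φ X := by
  obtain ⟨⟨hφ, g, hset, hactual, hnot⟩, hmin⟩ := hXs
  obtain ⟨x, hgX⟩ := Option.isSome_iff_exists.1 (hset X hX)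
  have hsat : Sat (intervene M (g.pin X)) φ := by
    by_contra hpin
    exact hmin _ (Set.sdiff_singleton_ssubset.2 hX)
      (ac12_diff_singleton_of_not_sat_pin hφ hset hactual X hpin)
  refine ⟨_, ⟨g.pin X, fun Y hY d hd => ?_, rfl⟩, (sol_intervene_pin_self M g X).symm, hsat,
    x, g.2 X x hgX, ?_⟩
  · have hYX : Y ≠ X := fun h => hY (hXsC (h ▸ hX))
    rw [g.pin_apply_of_ne hYX] at hd
    exact hactual Y (fun h => hY (hXsC h)) d hd
  · exact intervene_pin_single M g hgX _ ▸ hnot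

/-- the HP theory is similarity-based. -/
theorem hp_similarity_based {U V D : Type} [Fintype U] [Fintype V] [DecidableEq V] :
    SimilarityBased (HP (U := U) (V := V) (D := D)) := by
  intro M φ
  refine ⟨butFor_subset_hp M φ, ?_⟩
  rintro X ⟨Xs, hX, hXs⟩
  exact putative_of_mem_complexCause hXs hX fun Y hY => ⟨Xs, hY, hXs⟩

end HPFramework
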